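/- Let a schedule χ of jobs J place the set L̃ before c and R̃ after c, with all jobs in L̃ preceding c. If every job j scheduled (weakly) after c in χ has completion time at most S := Σ_{i∈J} s_i, every job in L̃ has completion time at most S − s_c, and the optimal schedule π satisfies C_j^π ≥ s_c for every job j scheduled (weakly) after c in π, then whenever s_c ≥ (1 − ε/n)·S and Σ_{j∈R̃} w_j ≤ Σ_{j∈R} w_j (R the set after c in π) and C_j^χ ≤ C_j^π for all j ∈ L ∩ L̃, the objective of χ is at most ((1+ε/n)/(1−ε/n)) times the objective of π. -/

import Mathlib

noncomputable def compTime (n : ℕ) (τ : Equiv.Perm (Fin n)) (s : Fin n → ℝ) (j : Fin n) : ℝ :=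
  ∑ i ∈ Finset.univ.filter (fun i => τ.symm i ≤ τ.symm j), s i

open Finset

/-!
Write `L, R` for `jobsBefore π c, jobsAfter π c` and `L̃, R̃` for `jobsBefore χ c, jobsAfter χ c`.
In `χ`, jobs of `L ∩ L̃` finish no later than in `π`, jobs of `R ∩ L̃` finish by `(ε/n)·S`, and `c`
and the jobs of `R̃` finish by `S`; as `w(R̃) ≤ w(R)`, the cost of `χ` is at most the `π`-cost of
`L ∩ L̃` plus `(1 + ε/n)·(w_c + w(R))·S`. In `π`, `c` and every job of `R` finish at or after
`s_c ≥ (1 - ε/n)·S`, so the cost of `π` is at least the `π`-cost of `L ∩ L̃` plus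
`(1 - ε/n)·(w_c + w(R))·S`.
-/

section Positions

variable {α : Type*} [Fintype α] [LinearOrder α]

def jobsBefore (τ : Equiv.Perm α) (c : α) : Finset α :=
  univ.filter fun j => τ.symm j < τ.symm c

def jobsAfter (τ : Equiv.Perm α) (c : α) : Finset α :=
  univ.filter fun j => τ.symm c < τ.symm j

theorem filter_not_lt_eq_insert_jobsAfter (τ : Equiv.Perm α) (c : α) :
    univ.filter (fun j => ¬ τ.symm j < τ.symm c) = insert c (jobsAfter τ c) := by
  ext j
  simp only [jobsAfter, mem_filter, mem_univ, true_and, mem_insert, not_lt, le_iff_lt_or_eq,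
    τ.symm.injective.eq_iff]
  tauto

theorem sum_eq_sum_jobsBefore_add_add_sum_jobsAfter {M : Type*} [AddCommMonoid M]
    (τ : Equiv.Perm α) (c : α) (f : α → M) :
    ∑ j, f j = ∑ j ∈ jobsBefore τ c, f j + (f c + ∑ j ∈ jobsAfter τ c, f j) := by
  rw [← sum_filter_add_sum_filter_not univ (fun j => τ.symm j < τ.symm c),
    filter_not_lt_eq_insert_jobsAfter, sum_insert (by simp [jobsAfter])]
  rfl

theorem sum_eq_sum_jobsBefore_inter_add_sum_jobsAfter_inter {M : Type*} [AddCommMonoid M]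
    (τ : Equiv.Perm α) {c : α} {s : Finset α} (hc : c ∉ s) (f : α → M) :
    ∑ j ∈ s, f j = ∑ j ∈ jobsBefore τ c ∩ s, f j + ∑ j ∈ jobsAfter τ c ∩ s, f j := by
  rw [← sum_filter_add_sum_filter_not s (fun j => τ.symm j < τ.symm c)]
  congr 1
  · congr 1; ext j; simp [jobsBefore, and_comm]
  · congr 1; ext j
    simp only [jobsAfter, mem_filter, mem_inter, mem_univ, true_and, not_lt,
      le_iff_lt_or_eq, τ.symm.injective.eq_iff]
    constructor
    · rintro ⟨hj, hlt | rfl⟩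
      · exact ⟨hlt, hj⟩
      · exact absurd hj hc
    · rintro ⟨hlt, hj⟩
      exact ⟨hj, Or.inl hlt⟩

end Positions

section Objective

variable {α : Type*} [Fintype α] [LinearOrder α] {w : α → ℝ} (π χ : Equiv.Perm α) (c : α)

theorem sum_mul_le_of_completion_bounds (hw : ∀ j, 0 ≤ w j) {C C' : α → ℝ} {S δ : ℝ}
    (hafter : ∀ j, χ.symm c ≤ χ.symm j → C j ≤ S)
    (hLL : ∀ j, π.symm j < π.symm c → χ.symm j < χ.symm c → C j ≤ C' j)
    (hRL : ∀ j, π.symm c < π.symm j → χ.symm j < χ.symm c → C j ≤ δ) :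
    ∑ j, w j * C j ≤ ∑ j ∈ jobsBefore π c ∩ jobsBefore χ c, w j * C' j
      + (∑ j ∈ jobsAfter π c ∩ jobsBefore χ c, w j) * δ
      + (w c + ∑ j ∈ jobsAfter χ c, w j) * S := by
  have hc : c ∉ jobsBefore χ c := by simp [jobsBefore]
  rw [sum_eq_sum_jobsBefore_add_add_sum_jobsAfter χ c,
    sum_eq_sum_jobsBefore_inter_add_sum_jobsAfter_inter π hc, add_mul, sum_mul, sum_mul]
  refine add_le_add (add_le_add (sum_le_sum fun j hj => ?_) (sum_le_sum fun j hj => ?_))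
    (add_le_add (mul_le_mul_of_nonneg_left (hafter c le_rfl) (hw c)) (sum_le_sum fun j hj => ?_))
  · simp only [jobsBefore, mem_inter, mem_filter, mem_univ, true_and] at hj
    exact mul_le_mul_of_nonneg_left (hLL j hj.1 hj.2) (hw j)
  · simp only [jobsBefore, jobsAfter, mem_inter, mem_filter, mem_univ, true_and] at hj
    exact mul_le_mul_of_nonneg_left (hRL j hj.1 hj.2) (hw j)
  · simp only [jobsAfter, mem_filter, mem_univ, true_and] at hj
    exact mul_le_mul_of_nonneg_left (hafter j hj.le) (hw j)

theorem add_sum_jobsAfter_mul_le_sum_mul (hw : ∀ j, 0 ≤ w j) {C : α → ℝ} (hC : ∀ j, 0 ≤ C j)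
    {T : ℝ} (hafter : ∀ j, π.symm c ≤ π.symm j → T ≤ C j) (s : Finset α) :
    ∑ j ∈ jobsBefore π c ∩ s, w j * C j + (w c + ∑ j ∈ jobsAfter π c, w j) * T
      ≤ ∑ j, w j * C j := by
  rw [sum_eq_sum_jobsBefore_add_add_sum_jobsAfter π c, add_mul, sum_mul]
  refine add_le_add ?_ (add_le_add (mul_le_mul_of_nonneg_left (hafter c le_rfl) (hw c))
    (sum_le_sum fun j hj => ?_))
  · exact sum_le_sum_of_subset_of_nonneg inter_subset_left fun j _ _ => mul_nonneg (hw j) (hC j)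
  · simp only [jobsAfter, mem_filter, mem_univ, true_and] at hj
    exact mul_le_mul_of_nonneg_left (hafter j hj.le) (hw j)

end Objective

theorem compTime_nonneg {n : ℕ} (τ : Equiv.Perm (Fin n)) {s : Fin n → ℝ} (hs : ∀ j, 0 ≤ s j)
    (j : Fin n) : 0 ≤ compTime n τ s j :=
  sum_nonneg fun i _ => hs i

theorem le_one_add_div_one_sub_mul {A a b r wc S ρ : ℝ} (hA : 0 ≤ A) (hwc : 0 ≤ wc) (hS : 0 ≤ S)
    (hρ0 : 0 ≤ ρ) (hρ1 : ρ < 1) (ha : a ≤ r) (hb : b ≤ r) :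
    A + a * (ρ * S) + (wc + b) * S ≤ (1 + ρ) / (1 - ρ) * (A + (wc + r) * ((1 - ρ) * S)) := by
  have h1ρ : 0 < 1 - ρ := by linarith
  have hK : A ≤ (1 + ρ) / (1 - ρ) * A :=
    le_mul_of_one_le_left hA ((one_le_div h1ρ).2 (by linarith))
  have hRest : a * (ρ * S) + (wc + b) * S ≤ (1 + ρ) * (wc + r) * S := by
    have := mul_le_mul_of_nonneg_right ha (mul_nonneg hρ0 hS)
    have := mul_le_mul_of_nonneg_right hb hS
    nlinarith [mul_nonneg hwc (mul_nonneg hρ0 hS)]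
  have hEq : (1 + ρ) / (1 - ρ) * (A + (wc + r) * ((1 - ρ) * S))
      = (1 + ρ) / (1 - ρ) * A + (1 + ρ) * (wc + r) * S := by
    field_simp
  linarith

theorem case1_approximation_general (n : ℕ) (hn : 3 ≤ n) (ε : ℝ) (hε0 : 0 < ε) (hε1 : ε ≤ 1)
    (w s : Fin n → ℝ) (hw : ∀ j, 0 ≤ w j) (hs : ∀ j, 0 ≤ s j)
    (c : Fin n) (π χ : Equiv.Perm (Fin n))
    -- S is the total processing time
    (S : ℝ) (hS : S = ∑ j : Fin n, s j)
    -- every job weakly after c in χ completes by S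
    (hafterχ : ∀ j, χ.symm c ≤ χ.symm j → compTime n χ s j ≤ S)
    -- in π, every job weakly after c completes no earlier than s c
    (hafterπ : ∀ j, π.symm c ≤ π.symm j → s c ≤ compTime n π s j)
    -- s c is large
    (hsc : (1 - ε / n) * S ≤ s c)
    -- total weight of R̃ is at most total weight of R
    (hRw : ∑ j ∈ Finset.univ.filter (fun j => χ.symm c < χ.symm j), w j ≤
           ∑ j ∈ Finset.univ.filter (fun j => π.symm c < π.symm j), w j)
    -- for jobs in L ∩ L̃, completion in χ is at most completion in π
    (hLL : ∀ j, π.symm j < π.symm c → χ.symm j < χ.symm c →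
        compTime n χ s j ≤ compTime n π s j)
    -- for jobs in R ∩ L̃, completion in χ is at most (ε/n)·S
    (hRL : ∀ j, π.symm c < π.symm j → χ.symm j < χ.symm c →
        compTime n χ s j ≤ (ε / n) * S) :
    ∑ j : Fin n, w j * compTime n χ s j ≤
      ((1 + ε / n) / (1 - ε / n)) * ∑ j : Fin n, w j * compTime n π s j := by
  have hn' : (3 : ℝ) ≤ n := by exact_mod_cast hn
  have hρ0 : 0 ≤ ε / n := by positivity
  have hρ1 : ε / n < 1 := (div_lt_one (by linarith)).2 (by linarith)
  have hS0 : 0 ≤ S := hS ▸ sum_nonneg fun j _ => hs j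
  have hRL_le_R : ∑ j ∈ jobsAfter π c ∩ jobsBefore χ c, w j ≤ ∑ j ∈ jobsAfter π c, w j :=
    sum_le_sum_of_subset_of_nonneg inter_subset_left fun j _ _ => hw j
  calc ∑ j, w j * compTime n χ s j
      ≤ ∑ j ∈ jobsBefore π c ∩ jobsBefore χ c, w j * compTime n π s j
        + (∑ j ∈ jobsAfter π c ∩ jobsBefore χ c, w j) * (ε / n * S)
        + (w c + ∑ j ∈ jobsAfter χ c, w j) * S :=
        sum_mul_le_of_completion_bounds π χ c hw hafterχ hLL hRL
    _ ≤ (1 + ε / n) / (1 - ε / n) * (∑ j ∈ jobsBefore π c ∩ jobsBefore χ c,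
          w j * compTime n π s j + (w c + ∑ j ∈ jobsAfter π c, w j) * ((1 - ε / n) * S)) :=
        le_one_add_div_one_sub_mul
          (sum_nonneg fun j _ => mul_nonneg (hw j) (compTime_nonneg π hs j)) (hw c) hS0 hρ0 hρ1
          hRL_le_R hRw
    _ ≤ (1 + ε / n) / (1 - ε / n) * ∑ j, w j * compTime n π s j := by
        gcongr
        exact add_sum_jobsAfter_mul_le_sum_mul π c hw (compTime_nonneg π hs)
          (fun j hj => hsc.trans (hafterπ j hj)) _

theorem case1_approximation (n : ℕ) (hn : 3 ≤ n) (ε : ℝ) (hε0 : 0 < ε) (hε1 : ε ≤ 1)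
    (w s : Fin n → ℝ) (hw : ∀ j, 0 ≤ w j) (hs : ∀ j, 0 ≤ s j)
    (c : Fin n) (π χ : Equiv.Perm (Fin n))
    -- S is the total processing time
    (S : ℝ) (hS : S = ∑ j : Fin n, s j)
    -- every job weakly after c in χ completes by S
    (hafterχ : ∀ j, χ.symm c ≤ χ.symm j → compTime n χ s j ≤ S)
    -- every job in L̃ (strictly before c in χ) completes by S − s c
    (hLt : ∀ j, χ.symm j < χ.symm c → compTime n χ s j ≤ S - s c)
    -- in π, every job weakly after c completes no earlier than s c
    (hafterπ : ∀ j, π.symm c ≤ π.symm j → s c ≤ compTime n π s j)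
    -- s c is large
    (hsc : (1 - ε / n) * S ≤ s c)
    -- total weight of R̃ is at most total weight of R
    (hRw : ∑ j ∈ Finset.univ.filter (fun j => χ.symm c < χ.symm j), w j ≤
           ∑ j ∈ Finset.univ.filter (fun j => π.symm c < π.symm j), w j)
    -- for jobs in L ∩ L̃, completion in χ is at most completion in π
    (hLL : ∀ j, π.symm j < π.symm c → χ.symm j < χ.symm c →
        compTime n χ s j ≤ compTime n π s j)
    -- for jobs in R ∩ L̃, completion in χ is at most (ε/n)·S
    (hRL : ∀ j, π.symm c < π.symm j → χ.symm j < χ.symm c →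
        compTime n χ s j ≤ (ε / n) * S) :
    ∑ j : Fin n, w j * compTime n χ s j ≤
      ((1 + ε / n) / (1 - ε / n)) * ∑ j : Fin n, w j * compTime n π s j :=
  case1_approximation_general n hn ε hε0 hε1 w s hw hs c π χ S hS hafterχ hafterπ hsc hRw hLL hRL
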